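/- arXiv:1612.08310 — 2 statements merged into one kernel-verified Lean document; each statement's English description precedes it below -/
import Mathlib

section
/- Let σ ∈ (1,2) and α ∈ (0,1) with α < σ. There exists a constant C > 0 depending only on d, α, σ such that for every everywhere differentiable u : ℝ^d → ℝ with [∇u]_{σ−1;ℝ^d} < ∞, one has [∇u]_{σ−1;ℝ^d} ≤ C sup_{r>0} sup_{x_0∈ℝ^d} r^{α−σ} [u]_{Λ^α(B_r(x_0))} ≤ C sup_{r>0} sup_{x_0∈ℝ^d} r^{α−σ} inf_{p∈𝒫_1} [u−p]_{α;B_r(x_0)}. -/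
/-!
Testing the scale-invariant Zygmund quantity `S` on the ball of radius `2‖h‖` around `x` bounds
every second difference: `|u (x + h) + u (x - h) - 2 u x| ≤ 2 ^ (σ - α) S ‖h‖ ^ σ`. Since `σ > 1`,
the difference quotients of `u` along `x + 2⁻ⁿ h` form a Cauchy sequence with geometric steps,
which gives the Taylor estimate `|u (x + h) - u x - Du(x) h| ≲ S ‖h‖ ^ σ`. A mixed difference
`u (x + h) - u (y + h) - u x + u y` is a difference of two second differences, so it is
`≲ S ‖x - y‖ ^ σ` when `‖h‖ = ‖x - y‖`, and the two Taylor estimates turn this into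
`‖Du(x) - Du(y)‖ ≲ S ‖x - y‖ ^ (σ - 1)`. The second inequality holds because second differences
annihilate affine functions and are bounded by twice the `α`-Hölder seminorm.
-/

open MeasureTheory Metric Filter Set
open scoped ENNReal Topology

noncomputable section

/-- Hölder seminorm `[u]_{γ;Ω}` (valued in `ℝ≥0∞`). -/
def holderSemi {E F : Type*} [NormedAddCommGroup E] [NormedAddCommGroup F]
    (γ : ℝ) (Ω : Set E) (u : E → F) : ℝ≥0∞ :=
  ⨆ (x : E) (_ : x ∈ Ω) (y : E) (_ : y ∈ Ω) (_ : x ≠ y),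
    ENNReal.ofReal (‖u x - u y‖ / ‖x - y‖ ^ γ)

/-- Zygmund seminorm `[u]_{Λ^α(Ω)}` (valued in `ℝ≥0∞`). -/
def zygmundSemi {E : Type*} [NormedAddCommGroup E] (α : ℝ) (Ω : Set E) (u : E → ℝ) : ℝ≥0∞ :=
  ⨆ (x : E) (h : E) (_ : h ≠ 0) (_ : x ∈ Ω) (_ : x + h ∈ Ω) (_ : x - h ∈ Ω),
    ENNReal.ofReal (|u (x + h) + u (x - h) - 2 * u x| / ‖h‖ ^ α)

/-- The `L_∞` norm of `u` on `Ω` (valued in `ℝ≥0∞`). -/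
def eSupNorm {E : Type*} (Ω : Set E) (u : E → ℝ) : ℝ≥0∞ :=
  ⨆ (x : E) (_ : x ∈ Ω), ENNReal.ofReal |u x|

/-- A Dini function: nonnegative, nondecreasing on `(0,∞)`, with `∫_0^1 ω(r)/r dr < ∞`. -/
def IsDini (ω : ℝ → ℝ) : Prop :=
  (∀ r, 0 < r → 0 ≤ ω r) ∧ MonotoneOn ω (Set.Ioi (0:ℝ)) ∧
    IntegrableOn (fun r => ω r / r) (Set.Ioc (0:ℝ) 1)

-- `∑ₙ (2⁻¹ ^ (σ - 1)) ^ (n + 1) / 2`, the sum of the steps between consecutive dyadic slopes.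
def dyadicConst (σ : ℝ) : ℝ := 2⁻¹ ^ (σ - 1) / (2 * (1 - 2⁻¹ ^ (σ - 1)))

theorem dyadicConst_nonneg {σ : ℝ} (hσ : 1 < σ) : 0 ≤ dyadicConst σ := by
  have : (2⁻¹ : ℝ) ^ (σ - 1) < 1 := Real.rpow_lt_one (by norm_num) (by norm_num) (by linarith)
  exact div_nonneg (by positivity) (by linarith)

theorem abs_slope_two_mul_sub_slope_le {φ : ℝ → ℝ} {M σ t : ℝ} (ht : 0 < t)
    (hM : |φ (2 * t) - 2 * φ t + φ 0| ≤ M * t ^ σ) :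
    |slope φ 0 (2 * t) - slope φ 0 t| ≤ M / 2 * t ^ (σ - 1) := by
  have hslope : slope φ 0 (2 * t) - slope φ 0 t = (φ (2 * t) - 2 * φ t + φ 0) / (2 * t) := by
    simp only [slope_def_field, sub_zero]
    field_simp
    ring
  rw [hslope, abs_div, abs_of_pos (by positivity : (0 : ℝ) < 2 * t), div_le_iff₀ (by positivity)]
  calc _ ≤ M * t ^ σ := hM
    _ = M / 2 * t ^ (σ - 1) * (2 * t) := by
      rw [Real.rpow_sub ht, Real.rpow_one]
      field_simp

theorem abs_sub_sub_deriv_le_of_dyadic_secondDiff {φ : ℝ → ℝ} {φ' M σ : ℝ} (hσ : 1 < σ)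
    (hφ : HasDerivAt φ φ' 0)
    (hM : ∀ t, 0 < t → |φ (2 * t) - 2 * φ t + φ 0| ≤ M * t ^ σ) :
    |φ 1 - φ 0 - φ'| ≤ dyadicConst σ * M := by
  set r : ℝ := 2⁻¹ ^ (σ - 1)
  have hr : r < 1 := Real.rpow_lt_one (by norm_num) (by norm_num) (by linarith)
  set f : ℕ → ℝ := fun n => slope φ 0 (2⁻¹ ^ n)
  have hf : Tendsto f atTop (𝓝 φ') := by
    refine (hasDerivAt_iff_tendsto_slope.mp hφ).comp <|
      tendsto_nhdsWithin_of_tendsto_nhds_of_eventually_within _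
        (tendsto_pow_atTop_nhds_zero_of_lt_one (by norm_num) (by norm_num)) ?_
    exact Eventually.of_forall fun n => (pow_pos (by norm_num) n).ne'
  have hstep : ∀ n, dist (f n) (f (n + 1)) ≤ M / 2 * r * r ^ n := fun n => by
    have h2 : (2⁻¹ : ℝ) ^ n = 2 * 2⁻¹ ^ (n + 1) := by rw [pow_succ]; ring
    have hpow : ((2⁻¹ : ℝ) ^ (n + 1)) ^ (σ - 1) = r * r ^ n := by
      rw [← Real.rpow_pow_comm (by norm_num), pow_succ']
    rw [Real.dist_eq, mul_assoc, ← hpow]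
    simp only [f, h2]
    exact abs_slope_two_mul_sub_slope_le (by positivity) (hM _ (by positivity))
  have := dist_le_of_le_geometric_of_tendsto₀ r _ hr hstep hf
  simp only [f, pow_zero, slope_def_field, sub_zero, div_one, Real.dist_eq] at this
  calc _ ≤ M / 2 * r / (1 - r) := this
    _ = dyadicConst σ * M := by
      have : 1 - r ≠ 0 := (sub_pos.2 hr).ne'
      change _ = r / (2 * (1 - r)) * M
      field_simp

section SecondDifferences

variable {E : Type*} [NormedAddCommGroup E] [NormedSpace ℝ E] {u : E → ℝ} {K σ : ℝ}

theorem abs_sub_sub_fderiv_le_of_secondDiff_le (hσ : 1 < σ) {x : E}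
    (hu : DifferentiableAt ℝ u x)
    (hK : ∀ x h : E, |u (x + h) + u (x - h) - 2 * u x| ≤ K * ‖h‖ ^ σ) (h : E) :
    |u (x + h) - u x - fderiv ℝ u x h| ≤ dyadicConst σ * (K * ‖h‖ ^ σ) := by
  have hline : HasDerivAt (fun s : ℝ => x + s • h) h 0 := by
    simpa using ((hasDerivAt_id (0 : ℝ)).smul_const h).const_add x
  have hφ : HasDerivAt (fun s : ℝ => u (x + s • h)) (fderiv ℝ u x h) 0 :=
    hu.hasFDerivAt.comp_hasDerivAt_of_eq 0 hline (by simp)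
  have := abs_sub_sub_deriv_le_of_dyadic_secondDiff hσ hφ fun t ht => by
    have e₂ : x + (2 * t) • h = (x + t • h) + t • h := by module
    have e₀ : x + (0 : ℝ) • h = (x + t • h) - t • h := by module
    calc _ = |u (x + t • h + t • h) + u (x + t • h - t • h) - 2 * u (x + t • h)| := by
          rw [e₂, e₀]; congr 1; ring
      _ ≤ K * (t ^ σ * ‖h‖ ^ σ) := by
          simpa [norm_smul, Real.norm_of_nonneg ht.le, Real.mul_rpow ht.le (norm_nonneg h)]
            using hK (x + t • h) (t • h)
      _ = K * ‖h‖ ^ σ * t ^ σ := by ring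
  simpa using this

theorem abs_mixedDiff_le_of_secondDiff_le (hK₀ : 0 ≤ K) (hσ : 0 ≤ σ)
    (hK : ∀ x h : E, |u (x + h) + u (x - h) - 2 * u x| ≤ K * ‖h‖ ^ σ) {x y h : E}
    (hh : ‖h‖ ≤ ‖x - y‖) :
    |u (x + h) - u (y + h) - u x + u y| ≤ 2 * K * ‖x - y‖ ^ σ := by
  -- both second differences are centred at `(x + y + h) / 2`
  set m : E := (2 : ℝ)⁻¹ • (h + (x - y))
  set n : E := (2 : ℝ)⁻¹ • (h - (x - y))
  have hsplit : u (x + h) - u (y + h) - u x + u y =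
      (u ((y + m) + m) + u ((y + m) - m) - 2 * u (y + m)) -
        (u ((y + m) + n) + u ((y + m) - n) - 2 * u (y + m)) := by
    have e₁ : (y + m) + m = x + h := by module
    have e₂ : (y + m) - m = y := by module
    have e₃ : (y + m) + n = y + h := by module
    have e₄ : (y + m) - n = x := by module
    rw [e₁, e₂, e₃, e₄]; ring
  have hhalf : ∀ v : E, ‖v‖ ≤ 2 * ‖x - y‖ → K * ‖(2 : ℝ)⁻¹ • v‖ ^ σ ≤ K * ‖x - y‖ ^ σ :=
    fun v hv => by
      gcongr
      rw [norm_smul, Real.norm_of_nonneg (by norm_num)]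
      linarith
  have hm : K * ‖m‖ ^ σ ≤ K * ‖x - y‖ ^ σ :=
    hhalf _ ((norm_add_le h (x - y)).trans (by linarith))
  have hn : K * ‖n‖ ^ σ ≤ K * ‖x - y‖ ^ σ :=
    hhalf _ ((norm_sub_le h (x - y)).trans (by linarith))
  rw [hsplit]
  calc _ ≤ _ := abs_sub _ _
    _ ≤ K * ‖m‖ ^ σ + K * ‖n‖ ^ σ := add_le_add (hK _ _) (hK _ _)
    _ ≤ 2 * K * ‖x - y‖ ^ σ := by linarith

end SecondDifferences

theorem norm_fderiv_sub_le_of_secondDiff_le {E : Type*} [NormedAddCommGroup E]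
    [NormedSpace ℝ E] {u : E → ℝ} {K σ : ℝ} (hσ : 1 < σ) (hu : Differentiable ℝ u)
    (hK₀ : 0 ≤ K) (hK : ∀ x h : E, |u (x + h) + u (x - h) - 2 * u x| ≤ K * ‖h‖ ^ σ)
    (x y : E) :
    ‖fderiv ℝ u x - fderiv ℝ u y‖ ≤ (2 * dyadicConst σ + 2) * K * ‖x - y‖ ^ (σ - 1) := by
  rcases eq_or_ne x y with rfl | hxy
  · simp [Real.zero_rpow (sub_pos.2 hσ).ne']
  have hρ : 0 < ‖x - y‖ := norm_pos_iff.2 (sub_ne_zero.2 hxy)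
  have hC := dyadicConst_nonneg hσ
  refine ContinuousLinearMap.opNorm_le_of_unit_norm (by positivity) fun e he => ?_
  set h := ‖x - y‖ • e
  have hh : ‖h‖ = ‖x - y‖ := by rw [norm_smul, he, norm_norm, mul_one]
  have hx := abs_sub_sub_fderiv_le_of_secondDiff_le hσ (hu x) hK h
  have hy := abs_sub_sub_fderiv_le_of_secondDiff_le hσ (hu y) hK h
  have hxy := abs_mixedDiff_le_of_secondDiff_le hK₀ (by linarith) hK hh.le
  rw [hh] at hx hy
  have hsplit : ‖x - y‖ * (fderiv ℝ u x - fderiv ℝ u y) e =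
      (u (x + h) - u (y + h) - u x + u y) - (u (x + h) - u x - fderiv ℝ u x h)
        + (u (y + h) - u y - fderiv ℝ u y h) := by
    simp only [h, map_smul, sub_apply, smul_eq_mul]
    ring
  have hbound : ‖x - y‖ * ‖(fderiv ℝ u x - fderiv ℝ u y) e‖ ≤
      (2 * dyadicConst σ + 2) * K * ‖x - y‖ ^ (σ - 1) * ‖x - y‖ := by
    rw [Real.norm_eq_abs, ← abs_of_pos hρ, ← abs_mul, abs_of_pos hρ, hsplit, mul_assoc,
      ← Real.rpow_add_one hρ.ne', sub_add_cancel]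
    calc _ ≤ |u (x + h) - u (y + h) - u x + u y - (u (x + h) - u x - fderiv ℝ u x h)|
          + |u (y + h) - u y - fderiv ℝ u y h| := abs_add_le _ _
      _ ≤ |u (x + h) - u (y + h) - u x + u y| + |u (x + h) - u x - fderiv ℝ u x h|
          + |u (y + h) - u y - fderiv ℝ u y h| := by grw [abs_sub]
      _ ≤ (2 * dyadicConst σ + 2) * K * ‖x - y‖ ^ σ := by linarith
  rw [mul_comm _ ‖x - y‖] at hbound
  exact le_of_mul_le_mul_left hbound hρ

theorem norm_gradient_sub_gradient {F : Type*} [NormedAddCommGroup F] [InnerProductSpace ℝ F]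
    [CompleteSpace F] (u : F → ℝ) (x y : F) :
    ‖gradient u x - gradient u y‖ = ‖fderiv ℝ u x - fderiv ℝ u y‖ := by
  rw [gradient, gradient, ← map_sub, LinearIsometryEquiv.norm_map]

section Seminorms

variable {E F : Type*} [NormedAddCommGroup E] [NormedAddCommGroup F]

theorem ofReal_div_le_holderSemi {γ : ℝ} {Ω : Set E} {u : E → F} {x y : E} (hx : x ∈ Ω)
    (hy : y ∈ Ω) (hxy : x ≠ y) :
    ENNReal.ofReal (‖u x - u y‖ / ‖x - y‖ ^ γ) ≤ holderSemi γ Ω u :=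
  le_iSup₂_of_le x hx <| le_iSup₂_of_le y hy <| le_iSup_of_le hxy le_rfl

theorem holderSemi_le_ofReal {γ C : ℝ} {Ω : Set E} {u : E → F}
    (hC : ∀ x ∈ Ω, ∀ y ∈ Ω, ‖u x - u y‖ ≤ C * ‖x - y‖ ^ γ) :
    holderSemi γ Ω u ≤ ENNReal.ofReal C :=
  iSup₂_le fun x hx => iSup₂_le fun y hy => iSup_le fun hxy =>
    ENNReal.ofReal_le_ofReal <| (div_le_iff₀ <|
      Real.rpow_pos_of_pos (norm_pos_iff.2 (sub_ne_zero.2 hxy)) γ).2 (hC x hx y hy)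

theorem ofReal_div_le_zygmundSemi {α : ℝ} {Ω : Set E} {u : E → ℝ} {x h : E} (hh : h ≠ 0)
    (hx : x ∈ Ω) (hxh : x + h ∈ Ω) (hxh' : x - h ∈ Ω) :
    ENNReal.ofReal (|u (x + h) + u (x - h) - 2 * u x| / ‖h‖ ^ α) ≤ zygmundSemi α Ω u :=
  le_iSup₂_of_le x h <| le_iSup₂_of_le hh hx <| le_iSup₂_of_le hxh hxh' le_rfl

theorem zygmundSemi_le_two_mul_holderSemi (α : ℝ) (Ω : Set E) (u : E → ℝ) :
    zygmundSemi α Ω u ≤ 2 * holderSemi α Ω u := by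
  refine iSup₂_le fun x h => iSup₂_le fun hh hx => iSup₂_le fun hxh hxh' => ?_
  have hfwd := ofReal_div_le_holderSemi (u := u) (γ := α) hxh hx (by simpa using hh)
  have hbwd := ofReal_div_le_holderSemi (u := u) (γ := α) hxh' hx (by simpa using hh)
  simp only [Real.norm_eq_abs, add_sub_cancel_left, sub_sub_cancel_left, norm_neg] at hfwd hbwd
  calc ENNReal.ofReal (|u (x + h) + u (x - h) - 2 * u x| / ‖h‖ ^ α)
      ≤ ENNReal.ofReal (|u (x + h) - u x| / ‖h‖ ^ α + |u (x - h) - u x| / ‖h‖ ^ α) := by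
        rw [← add_div]
        gcongr
        calc _ = |(u (x + h) - u x) + (u (x - h) - u x)| := by ring_nf
          _ ≤ _ := abs_add_le _ _
    _ ≤ holderSemi α Ω u + holderSemi α Ω u := ENNReal.ofReal_add_le.trans (add_le_add hfwd hbwd)
    _ = 2 * holderSemi α Ω u := (two_mul _).symm

end Seminorms

section Affine

variable {F : Type*} [NormedAddCommGroup F] [InnerProductSpace ℝ F]

theorem zygmundSemi_sub_affine (α : ℝ) (Ω : Set F) (u : F → ℝ) (a₀ : ℝ) (b : F) :
    zygmundSemi α Ω (fun x => u x - (a₀ + (inner ℝ b x : ℝ))) = zygmundSemi α Ω u := by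
  have hp : ∀ x h : F, u (x + h) - (a₀ + inner ℝ b (x + h)) +
      (u (x - h) - (a₀ + inner ℝ b (x - h))) - 2 * (u x - (a₀ + inner ℝ b x)) =
        u (x + h) + u (x - h) - 2 * u x := fun x h => by
    rw [inner_add_right, inner_sub_right]
    ring
  simp only [zygmundSemi, hp]

theorem zygmundSemi_le_two_mul_iInf_holderSemi_sub_affine (α : ℝ) (Ω : Set F) (u : F → ℝ) :
    zygmundSemi α Ω u ≤
      2 * ⨅ (a₀ : ℝ) (b : F), holderSemi α Ω (fun x => u x - (a₀ + (inner ℝ b x : ℝ))) := by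
  simp only [ENNReal.mul_iInf_of_ne two_ne_zero ENNReal.ofNat_ne_top]
  refine le_iInf₂ fun a₀ b => ?_
  rw [← zygmundSemi_sub_affine α Ω u a₀ b]
  exact zygmundSemi_le_two_mul_holderSemi _ _ _

end Affine

section ScaledSup

variable {E : Type*} [NormedAddCommGroup E]

def scaledSup (β : ℝ) (Φ : Set E → ℝ≥0∞) : ℝ≥0∞ :=
  ⨆ (r : ℝ) (_ : 0 < r) (x₀ : E), ENNReal.ofReal (r ^ β) * Φ (ball x₀ r)

theorem le_scaledSup {β r : ℝ} (Φ : Set E → ℝ≥0∞) (hr : 0 < r) (x₀ : E) :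
    ENNReal.ofReal (r ^ β) * Φ (ball x₀ r) ≤ scaledSup β Φ :=
  le_iSup₂_of_le r hr <| le_iSup_of_le x₀ le_rfl

theorem scaledSup_le_mul {β : ℝ} {Φ Ψ : Set E → ℝ≥0∞} {c : ℝ≥0∞}
    (h : ∀ (x₀ : E) (r : ℝ), Φ (ball x₀ r) ≤ c * Ψ (ball x₀ r)) :
    scaledSup β Φ ≤ c * scaledSup β Ψ :=
  iSup₂_le fun r hr => iSup_le fun x₀ =>
    calc ENNReal.ofReal (r ^ β) * Φ (ball x₀ r)
        ≤ ENNReal.ofReal (r ^ β) * (c * Ψ (ball x₀ r)) := by gcongr; exact h x₀ r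
      _ = c * (ENNReal.ofReal (r ^ β) * Ψ (ball x₀ r)) := mul_left_comm _ _ _
      _ ≤ c * scaledSup β Ψ := by gcongr; exact le_scaledSup Ψ hr x₀

theorem abs_secondDiff_le_of_scaledSup_zygmundSemi_ne_top {α σ : ℝ} {u : E → ℝ}
    (hS : scaledSup (α - σ) (fun B => zygmundSemi α B u) ≠ ⊤) (x h : E) :
    |u (x + h) + u (x - h) - 2 * u x| ≤
      2 ^ (σ - α) * (scaledSup (α - σ) (fun B => zygmundSemi α B u)).toReal * ‖h‖ ^ σ := by
  set M := (scaledSup (α - σ) (fun B => zygmundSemi α B u)).toReal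
  rcases eq_or_ne h 0 with rfl | hh
  · simp only [add_zero, sub_zero]
    rw [show u x + u x - 2 * u x = 0 by ring, abs_zero]
    positivity
  have hh₀ : 0 < ‖h‖ := norm_pos_iff.2 hh
  set r := 2 * ‖h‖
  have hr : 0 < r := by positivity
  have hball : ∀ v : E, ‖v‖ = ‖h‖ → x + v ∈ ball x r := fun v hv => by
    rw [mem_ball, dist_eq_norm, add_sub_cancel_left, hv]
    linarith
  have hterm := (le_scaledSup (β := α - σ) (fun B => zygmundSemi α B u) hr x).trans'
    (mul_le_mul_right (ofReal_div_le_zygmundSemi hh (mem_ball_self hr) (hball h rfl)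
      (by simpa [sub_eq_add_neg] using hball (-h) (norm_neg h))) _)
  rw [← ENNReal.ofReal_mul (by positivity), ENNReal.ofReal_le_iff_le_toReal hS] at hterm
  have hscale : r ^ (α - σ) * (2 ^ (σ - α) * ‖h‖ ^ σ) = ‖h‖ ^ α := by
    rw [Real.mul_rpow (by norm_num) hh₀.le, mul_mul_mul_comm, ← Real.rpow_add two_pos,
      ← Real.rpow_add hh₀]
    norm_num
  calc |u (x + h) + u (x - h) - 2 * u x|
      = r ^ (α - σ) * (|u (x + h) + u (x - h) - 2 * u x| / ‖h‖ ^ α) *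
          (2 ^ (σ - α) * ‖h‖ ^ σ) := by
        rw [mul_right_comm, hscale]
        field_simp
    _ ≤ M * (2 ^ (σ - α) * ‖h‖ ^ σ) := by gcongr
    _ = 2 ^ (σ - α) * M * ‖h‖ ^ σ := by ring

end ScaledSup

theorem holderSemi_gradient_le_scaledSup_zygmundSemi {F : Type*} [NormedAddCommGroup F]
    [InnerProductSpace ℝ F] [CompleteSpace F] {α σ : ℝ} (hσ : 1 < σ) {u : F → ℝ}
    (hu : Differentiable ℝ u) :
    holderSemi (σ - 1) univ (gradient u) ≤
      ENNReal.ofReal ((2 * dyadicConst σ + 2) * 2 ^ (σ - α)) *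
        scaledSup (α - σ) (fun B => zygmundSemi α B u) := by
  set S := scaledSup (α - σ) (fun B => zygmundSemi α B u)
  have hC : 0 < (2 * dyadicConst σ + 2) * 2 ^ (σ - α) := by
    have := dyadicConst_nonneg hσ
    positivity
  rcases eq_or_ne S ⊤ with hS | hS
  · rw [hS, ENNReal.mul_top (ENNReal.ofReal_pos.2 hC).ne']
    exact le_top
  have hK := abs_secondDiff_le_of_scaledSup_zygmundSemi_ne_top hS
  calc holderSemi (σ - 1) univ (gradient u)
      ≤ ENNReal.ofReal ((2 * dyadicConst σ + 2) * 2 ^ (σ - α) * S.toReal) :=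
        holderSemi_le_ofReal fun x _ y _ => by
          rw [norm_gradient_sub_gradient, mul_assoc _ (2 ^ (σ - α) : ℝ)]
          exact norm_fderiv_sub_le_of_secondDiff_le hσ hu (by positivity) hK x y
    _ = ENNReal.ofReal ((2 * dyadicConst σ + 2) * 2 ^ (σ - α)) * S := by
        rw [ENNReal.ofReal_mul hC.le, ENNReal.ofReal_toReal hS]

theorem holder_le_zygmund_series_order_gt_one_general
    (d : ℕ) (σ α : ℝ) (hσ1 : 1 < σ) :
    ∃ C : ℝ, 0 < C ∧
      ∀ u : EuclideanSpace ℝ (Fin d) → ℝ, Differentiable ℝ u →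
        holderSemi (σ - 1) (Set.univ : Set (EuclideanSpace ℝ (Fin d))) (gradient u) < ⊤ →
        holderSemi (σ - 1) (Set.univ : Set (EuclideanSpace ℝ (Fin d))) (gradient u) ≤
            ENNReal.ofReal C *
              ⨆ (r : ℝ) (_ : 0 < r) (x0 : EuclideanSpace ℝ (Fin d)),
                ENNReal.ofReal (r ^ (α - σ)) * zygmundSemi α (ball x0 r) u ∧
          (⨆ (r : ℝ) (_ : 0 < r) (x0 : EuclideanSpace ℝ (Fin d)),
              ENNReal.ofReal (r ^ (α - σ)) * zygmundSemi α (ball x0 r) u) ≤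
            ENNReal.ofReal C *
              ⨆ (r : ℝ) (_ : 0 < r) (x0 : EuclideanSpace ℝ (Fin d)),
                ENNReal.ofReal (r ^ (α - σ)) *
                  ⨅ (a0 : ℝ) (b : EuclideanSpace ℝ (Fin d)),
                    holderSemi α (ball x0 r) (fun x => u x - (a0 + (inner ℝ b x : ℝ))) := by
  set C₀ := (2 * dyadicConst σ + 2) * 2 ^ (σ - α)
  refine ⟨max 2 C₀, by positivity, fun u hu _ => ⟨?_, ?_⟩⟩
  · calc _ ≤ ENNReal.ofReal C₀ * scaledSup (α - σ) (fun B => zygmundSemi α B u) :=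
          holderSemi_gradient_le_scaledSup_zygmundSemi hσ1 hu
      _ ≤ _ := mul_le_mul' (ENNReal.ofReal_le_ofReal (le_max_right _ _)) le_rfl
  · calc scaledSup (α - σ) (fun B => zygmundSemi α B u)
        ≤ 2 * scaledSup (α - σ) (fun B => ⨅ (a0 : ℝ) (b : EuclideanSpace ℝ (Fin d)),
            holderSemi α B (fun x => u x - (a0 + (inner ℝ b x : ℝ)))) :=
          scaledSup_le_mul fun _ _ => zygmundSemi_le_two_mul_iInf_holderSemi_sub_affine _ _ _
      _ ≤ _ := by
          refine mul_le_mul' ?_ le_rfl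
          rw [← ENNReal.ofReal_ofNat 2]
          exact ENNReal.ofReal_le_ofReal (le_max_left _ _)

/-- Campanato-type characterization of the `C^σ` seminorm, `σ ∈ (1,2)`. -/
theorem holder_le_zygmund_series_order_gt_one
    (d : ℕ) (hd : 1 ≤ d) (σ α : ℝ) (hσ1 : 1 < σ) (hσ2 : σ < 2)
    (hα : 0 < α) (hα1 : α < 1) (hασ : α < σ) :
    ∃ C : ℝ, 0 < C ∧
      ∀ u : EuclideanSpace ℝ (Fin d) → ℝ, Differentiable ℝ u →
        holderSemi (σ - 1) (Set.univ : Set (EuclideanSpace ℝ (Fin d))) (gradient u) < ⊤ →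
        holderSemi (σ - 1) (Set.univ : Set (EuclideanSpace ℝ (Fin d))) (gradient u) ≤
            ENNReal.ofReal C *
              ⨆ (r : ℝ) (_ : 0 < r) (x0 : EuclideanSpace ℝ (Fin d)),
                ENNReal.ofReal (r ^ (α - σ)) * zygmundSemi α (ball x0 r) u ∧
          (⨆ (r : ℝ) (_ : 0 < r) (x0 : EuclideanSpace ℝ (Fin d)),
              ENNReal.ofReal (r ^ (α - σ)) * zygmundSemi α (ball x0 r) u) ≤
            ENNReal.ofReal C *
              ⨆ (r : ℝ) (_ : 0 < r) (x0 : EuclideanSpace ℝ (Fin d)),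
                ENNReal.ofReal (r ^ (α - σ)) *
                  ⨅ (a0 : ℝ) (b : EuclideanSpace ℝ (Fin d)),
                    holderSemi α (ball x0 r) (fun x => u x - (a0 + (inner ℝ b x : ℝ))) :=
  holder_le_zygmund_series_order_gt_one_general d σ α hσ1
end
end

section
/- Let α ∈ (0,1), let u : ℝ^d → ℝ be differentiable at x_0 ∈ ℝ^d, and let k be a nonnegative integer. Then for every x ∈ B_{2^{−k}}(x_0), |u(x) − u(x_0) − ∇u(x_0)·(x − x_0)| ≤ 2^{−α} Σ_{i=k}^∞ 2^{i−k−iα} [u]_{Λ^α(B_{2^{−i}}(x_0))}, the inequality being understood in [0,∞]. -/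
/-!
Restrict to the segment `t ↦ x₀ + t (x - x₀)` and let `g` be the first-order Taylor remainder
there, so that `g(t) = o(t)`. Telescoping over dyadic scales,
`g(1) = ∑_{j<n} 2^j (g(2^{-j}) - 2 g(2^{-j-1})) + 2^n g(2^{-n})`, where the last term tends to `0`
and `g(2^{-j}) - 2 g(2^{-j-1})` is the second difference of `u` at `x₀ + w` with step
`w = 2^{-j-1}(x - x₀)`. All three points lie in `B_{2^{-j-k}}(x₀)` and `‖w‖ < 2^{-j-k-1}`, so the
Zygmund seminorm of that ball bounds the `j`-th term by `2^{-α} 2^{j-(j+k)α} [u]`.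
-/

open MeasureTheory Metric Filter Set
open scoped ENNReal Topology

noncomputable section

lemma sum_dyadic_telescope (g : ℝ → ℝ) (n : ℕ) :
    g 1 = ∑ j ∈ Finset.range n, 2 ^ j * (g (2 ^ j)⁻¹ - 2 * g (2 ^ (j + 1))⁻¹)
      + 2 ^ n * g (2 ^ n)⁻¹ := by
  induction n with
  | zero => simp
  | succ n ih => rw [Finset.sum_range_succ, ih]; ring

lemma tendsto_two_pow_mul_apply_inv_two_pow_of_isLittleO {g : ℝ → ℝ} (hg : g =o[𝓝 0] fun t => t) :
    Tendsto (fun n : ℕ => 2 ^ n * g (2 ^ n)⁻¹) atTop (𝓝 0) := by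
  have h2 : Tendsto (fun n : ℕ => ((2:ℝ) ^ n)⁻¹) atTop (𝓝 0) :=
    tendsto_inv_atTop_zero.comp (tendsto_pow_atTop_atTop_of_one_lt one_lt_two)
  simpa [Function.comp_def, div_eq_mul_inv, mul_comm] using hg.tendsto_div_nhds_zero.comp h2

lemma ofReal_abs_le_tsum_dyadic_of_isLittleO {g : ℝ → ℝ} (hg : g =o[𝓝 0] fun t => t) :
    ENNReal.ofReal |g 1| ≤
      ∑' j : ℕ, ENNReal.ofReal (2 ^ j * |g (2 ^ j)⁻¹ - 2 * g (2 ^ (j + 1))⁻¹|) := by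
  set S := ∑' j : ℕ, ENNReal.ofReal (2 ^ j * |g (2 ^ j)⁻¹ - 2 * g (2 ^ (j + 1))⁻¹|)
  have hn (n : ℕ) : ENNReal.ofReal |g 1| ≤ S + ENNReal.ofReal |2 ^ n * g (2 ^ n)⁻¹| := by
    calc ENNReal.ofReal |g 1|
        ≤ ENNReal.ofReal (∑ j ∈ Finset.range n, 2 ^ j * |g (2 ^ j)⁻¹ - 2 * g (2 ^ (j + 1))⁻¹|
            + |2 ^ n * g (2 ^ n)⁻¹|) := by
          refine ENNReal.ofReal_le_ofReal ?_
          rw [sum_dyadic_telescope g n]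
          refine (abs_add_le _ _).trans (add_le_add_left ?_ _)
          refine (Finset.abs_sum_le_sum_abs _ _).trans ?_
          simp [abs_mul]
      _ = ∑ j ∈ Finset.range n, ENNReal.ofReal (2 ^ j * |g (2 ^ j)⁻¹ - 2 * g (2 ^ (j + 1))⁻¹|)
            + ENNReal.ofReal |2 ^ n * g (2 ^ n)⁻¹| := by
          rw [ENNReal.ofReal_add (by positivity) (abs_nonneg _),
            ENNReal.ofReal_sum_of_nonneg fun _ _ => by positivity]
      _ ≤ S + ENNReal.ofReal |2 ^ n * g (2 ^ n)⁻¹| := by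
          gcongr
          exact ENNReal.sum_le_tsum _
  have htail : Tendsto (fun n : ℕ => S + ENNReal.ofReal |2 ^ n * g (2 ^ n)⁻¹|) atTop (𝓝 S) := by
    simpa using tendsto_const_nhds.add
      (ENNReal.tendsto_ofReal (tendsto_two_pow_mul_apply_inv_two_pow_of_isLittleO hg).abs)
  exact ge_of_tendsto' htail hn

lemma HasDerivAt.ofReal_abs_sub_sub_le_tsum {φ : ℝ → ℝ} {c : ℝ} (hφ : HasDerivAt φ c 0) :
    ENNReal.ofReal |φ 1 - φ 0 - c| ≤
      ∑' j : ℕ, ENNReal.ofReal (2 ^ j * |φ (2 ^ j)⁻¹ + φ 0 - 2 * φ (2 ^ (j + 1))⁻¹|) := by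
  have hg : (fun t => φ t - φ 0 - t * c) =o[𝓝 0] fun t => t := by
    simpa using hasDerivAt_iff_isLittleO_nhds_zero.1 hφ
  convert ofReal_abs_le_tsum_dyadic_of_isLittleO hg using 1
  · simp
  · refine tsum_congr fun j => ?_
    ring_nf

def secondDiff {E : Type*} [AddGroup E] (u : E → ℝ) (x h : E) : ℝ :=
  u (x + h) + u (x - h) - 2 * u x

lemma ofReal_abs_secondDiff_le_zygmundSemi_mul {E : Type*} [NormedAddCommGroup E] {α : ℝ}
    {Ω : Set E} {u : E → ℝ} {x h : E} (hx : x ∈ Ω) (hxh : x + h ∈ Ω) (hxh' : x - h ∈ Ω) :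
    ENNReal.ofReal |secondDiff u x h| ≤ zygmundSemi α Ω u * ENNReal.ofReal (‖h‖ ^ α) := by
  rcases eq_or_ne h 0 with rfl | h0
  · simp [secondDiff, two_mul]
  have hpos : 0 < ‖h‖ ^ α := Real.rpow_pos_of_pos (norm_pos_iff.2 h0) α
  calc ENNReal.ofReal |secondDiff u x h|
      = ENNReal.ofReal (|secondDiff u x h| / ‖h‖ ^ α) * ENNReal.ofReal (‖h‖ ^ α) := by
        rw [← ENNReal.ofReal_mul (by positivity), div_mul_cancel₀ _ hpos.ne']
    _ ≤ zygmundSemi α Ω u * ENNReal.ofReal (‖h‖ ^ α) := by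
        gcongr
        exact le_iSup_of_le x <| le_iSup_of_le h <| le_iSup_of_le h0 <| le_iSup_of_le hx <|
          le_iSup_of_le hxh <| le_iSup_of_le hxh' le_rfl

lemma HasFDerivAt.ofReal_abs_sub_sub_le_tsum_secondDiff {E : Type*} [NormedAddCommGroup E]
    [NormedSpace ℝ E] {u : E → ℝ} {f' : E →L[ℝ] ℝ} {x0 : E} (hu : HasFDerivAt u f' x0) (h : E) :
    ENNReal.ofReal |u (x0 + h) - u x0 - f' h| ≤
      ∑' j : ℕ, ENNReal.ofReal
        (2 ^ j * |secondDiff u (x0 + (2 ^ (j + 1) : ℝ)⁻¹ • h) ((2 ^ (j + 1) : ℝ)⁻¹ • h)|) := by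
  have hline : HasDerivAt (fun t : ℝ => x0 + t • h) h 0 := by
    simpa using ((hasDerivAt_id (0:ℝ)).smul_const h).const_add x0
  have hφ : HasDerivAt (fun t : ℝ => u (x0 + t • h)) (f' h) 0 :=
    hu.comp_hasDerivAt_of_eq 0 hline (by simp)
  convert hφ.ofReal_abs_sub_sub_le_tsum using 1
  · simp
  · refine tsum_congr fun j => ?_
    have hhalf : (2 ^ (j + 1) : ℝ)⁻¹ + (2 ^ (j + 1))⁻¹ = (2 ^ j)⁻¹ := by ring
    simp only [secondDiff, add_sub_cancel_right, add_assoc, ← add_smul, hhalf, zero_smul,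
      add_zero]

lemma two_pow_mul_abs_secondDiff_le_zygmundSemi {E : Type*} [NormedAddCommGroup E]
    [NormedSpace ℝ E] {α : ℝ} (hα : 0 ≤ α) {u : E → ℝ} {x0 h : E} {k : ℕ}
    (hh : ‖h‖ < 2 ^ (-(k:ℝ))) (j : ℕ) :
    ENNReal.ofReal
        (2 ^ j * |secondDiff u (x0 + (2 ^ (j + 1) : ℝ)⁻¹ • h) ((2 ^ (j + 1) : ℝ)⁻¹ • h)|) ≤
      ENNReal.ofReal (2 ^ (-α)) * (ENNReal.ofReal (2 ^ ((j:ℝ) - (j + k) * α)) *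
        zygmundSemi α (ball x0 (2 ^ (-((j:ℝ) + k)))) u) := by
  set w : E := (2 ^ (j + 1) : ℝ)⁻¹ • h
  set r : ℝ := 2 ^ (-((j:ℝ) + k))
  have hw : ‖w‖ < 2 ^ (-((j:ℝ) + k + 1)) := by
    have hinv : (2 ^ (j + 1) : ℝ)⁻¹ = 2 ^ (-((j:ℝ) + 1)) := by
      rw [← Real.rpow_natCast, ← Real.rpow_neg zero_le_two]; push_cast; rfl
    calc ‖w‖ = (2 ^ (j + 1) : ℝ)⁻¹ * ‖h‖ := by simp [w, norm_smul]
      _ < 2 ^ (-((j:ℝ) + 1)) * 2 ^ (-(k:ℝ)) := by rw [hinv]; gcongr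
      _ = 2 ^ (-((j:ℝ) + k + 1)) := by rw [← Real.rpow_add two_pos]; ring_nf
  have hr : 0 < r := by positivity
  have hwr : ‖w‖ < r / 2 := by
    rwa [show -((j:ℝ) + k + 1) = -((j:ℝ) + k) - 1 by ring, Real.rpow_sub_one two_ne_zero] at hw
  have hcenter : x0 + w ∈ ball x0 r := by
    rw [mem_ball_iff_norm, add_sub_cancel_left]; linarith
  have hright : x0 + w + w ∈ ball x0 r := by
    rw [mem_ball_iff_norm, add_assoc, add_sub_cancel_left]
    linarith [norm_add_le w w]
  have hleft : x0 + w - w ∈ ball x0 r := by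
    rw [add_sub_cancel_right]; exact mem_ball_self (by positivity)
  have hscale : (2:ℝ) ^ j * (2 ^ (-((j:ℝ) + k + 1))) ^ α =
      2 ^ (-α) * 2 ^ ((j:ℝ) - (j + k) * α) := by
    rw [← Real.rpow_mul zero_le_two, ← Real.rpow_natCast, ← Real.rpow_add two_pos,
      ← Real.rpow_add two_pos]
    ring_nf
  calc ENNReal.ofReal (2 ^ j * |secondDiff u (x0 + w) w|)
      = ENNReal.ofReal (2 ^ j) * ENNReal.ofReal |secondDiff u (x0 + w) w| := by
        rw [ENNReal.ofReal_mul (by positivity)]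
    _ ≤ ENNReal.ofReal (2 ^ j) * (zygmundSemi α (ball x0 r) u * ENNReal.ofReal (‖w‖ ^ α)) := by
        gcongr
        exact ofReal_abs_secondDiff_le_zygmundSemi_mul hcenter hright hleft
    _ ≤ ENNReal.ofReal (2 ^ j) * (zygmundSemi α (ball x0 r) u *
          ENNReal.ofReal ((2 ^ (-((j:ℝ) + k + 1))) ^ α)) := by
        gcongr
    _ = _ := by
        rw [mul_left_comm, ← ENNReal.ofReal_mul (by positivity), hscale,
          ENNReal.ofReal_mul (by positivity)]
        ring

theorem taylor_remainder_zygmund_series_general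
    (d : ℕ) (α : ℝ) (hα : α ∈ Set.Ioo (0:ℝ) 1)
    (u : EuclideanSpace ℝ (Fin d) → ℝ) (x0 : EuclideanSpace ℝ (Fin d))
    (hdiff : DifferentiableAt ℝ u x0) (k : ℕ) :
    ∀ x ∈ ball x0 ((2:ℝ) ^ (-(k:ℝ))),
      ENNReal.ofReal |u x - u x0 - (inner ℝ (gradient u x0) (x - x0) : ℝ)| ≤
        ENNReal.ofReal ((2:ℝ) ^ (-α)) *
          ∑' m : ℕ, ENNReal.ofReal ((2:ℝ) ^ ((m:ℝ) - ((m:ℝ) + (k:ℝ)) * α)) *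
            zygmundSemi α (ball x0 ((2:ℝ) ^ (-((m:ℝ) + (k:ℝ))))) u := by
  intro x hx
  have hh : ‖x - x0‖ < 2 ^ (-(k:ℝ)) := by rwa [mem_ball_iff_norm] at hx
  have hgrad : inner ℝ (gradient u x0) (x - x0) = fderiv ℝ u x0 (x - x0) := by
    simp [gradient]
  calc ENNReal.ofReal |u x - u x0 - inner ℝ (gradient u x0) (x - x0)|
      = ENNReal.ofReal |u (x0 + (x - x0)) - u x0 - fderiv ℝ u x0 (x - x0)| := by
        rw [hgrad, add_sub_cancel]
    _ ≤ _ := hdiff.hasFDerivAt.ofReal_abs_sub_sub_le_tsum_secondDiff _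
    _ ≤ _ := ENNReal.tsum_le_tsum fun j =>
        two_pow_mul_abs_secondDiff_le_zygmundSemi hα.1.le hh j
    _ = _ := ENNReal.tsum_mul_left

/-- Pointwise Taylor remainder estimate via a series of Zygmund seminorms. -/
theorem taylor_remainder_zygmund_series
    (d : ℕ) (hd : 1 ≤ d) (α : ℝ) (hα : α ∈ Set.Ioo (0:ℝ) 1)
    (u : EuclideanSpace ℝ (Fin d) → ℝ) (x0 : EuclideanSpace ℝ (Fin d))
    (hdiff : DifferentiableAt ℝ u x0) (k : ℕ) :
    ∀ x ∈ ball x0 ((2:ℝ) ^ (-(k:ℝ))),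
      ENNReal.ofReal |u x - u x0 - (inner ℝ (gradient u x0) (x - x0) : ℝ)| ≤
        ENNReal.ofReal ((2:ℝ) ^ (-α)) *
          ∑' m : ℕ, ENNReal.ofReal ((2:ℝ) ^ ((m:ℝ) - ((m:ℝ) + (k:ℝ)) * α)) *
            zygmundSemi α (ball x0 ((2:ℝ) ^ (-((m:ℝ) + (k:ℝ))))) u :=
  taylor_remainder_zygmund_series_general d α hα u x0 hdiff k
end
end
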